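/- Under the hypotheses of the previous statement together with the conclusions of the Guan-type lemma, one obtains σ₂(λ) ≥ (5/7)·(σ₁(λ) − λ₁)·λ₁ and for each j ≥ 2, |λ_j| ≤ (n−1)²√(2A/(n(n−1)λ₁ m₁)) + 7(n−1)/(5 λ₁ m₂). -/

import Mathlib

open Finset

/-- k-th elementary symmetric polynomial of lam : Fin n → ℝ. -/
noncomputable def esym (n k : ℕ) (lam : Fin n → ℝ) : ℝ :=
  ∑ s ∈ Finset.univ.powersetCard k, ∏ i ∈ s, lam i

/-- The Garding cone Γ₂. -/
def GammaTwo (n : ℕ) (lam : Fin n → ℝ) : Prop :=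
  0 < esym n 1 lam ∧ 0 < esym n 2 lam

lemma aux_sum_pc_one {ι : Type*} (s : Finset ι) (f : ι → ℝ) :
    ∑ t ∈ s.powersetCard 1, ∏ i ∈ t, f i = ∑ i ∈ s, f i := by
  rw [Finset.powersetCard_one, Finset.sum_map]
  simp

lemma aux_sq_sum {ι : Type*} [DecidableEq ι] (s : Finset ι) (f : ι → ℝ) :
    (∑ i ∈ s, f i) ^ 2 =
      ∑ i ∈ s, f i ^ 2 + 2 * ∑ t ∈ s.powersetCard 2, ∏ i ∈ t, f i := by
  induction s using Finset.induction_on with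
  | empty =>
    rw [Finset.powersetCard_eq_empty.mpr (by simp)]
    simp
  | @insert a s ha ih =>
    have hdisj : Disjoint (s.powersetCard 2) ((s.powersetCard 1).image (insert a)) := by
      rw [Finset.disjoint_left]
      intro t ht ht'
      have h1 : t ∈ s.powersetCard 2 := ht
      have h2 : t ⊆ s := (Finset.mem_powersetCard.mp h1).1
      obtain ⟨u, hu, rfl⟩ := Finset.mem_image.mp ht'
      exact ha (h2 (Finset.mem_insert_self a u))
    have himg : ∑ t ∈ (s.powersetCard 1).image (insert a), ∏ i ∈ t, f i
        = f a * ∑ i ∈ s, f i := by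
      rw [Finset.sum_image, ← aux_sum_pc_one s f, Finset.mul_sum]
      · apply Finset.sum_congr rfl
        intro u hu
        have hau : a ∉ u := fun h => ha ((Finset.mem_powersetCard.mp hu).1 h)
        rw [Finset.prod_insert hau]
      · intro u hu v hv huv
        have hau : a ∉ u := fun h => ha ((Finset.mem_powersetCard.mp hu).1 h)
        have hav : a ∉ v := fun h => ha ((Finset.mem_powersetCard.mp hv).1 h)
        have := congrArg (fun t => Finset.erase t a) huv
        simpa [Finset.erase_insert hau, Finset.erase_insert hav] using this
    rw [Finset.sum_insert ha, Finset.sum_insert ha,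
      Finset.powersetCard_succ_insert ha 1, Finset.sum_union hdisj, himg]
    linear_combination ih

theorem corollary_estimates {n : ℕ} (hn : 3 ≤ n) (m1 m2 A : ℝ) (hm : m1 ≥ m2)
    (hm2 : 0 < m2) (hA : 0 ≤ A) (lam : Fin n → ℝ) (hord : Antitone lam)
    (hG : GammaTwo n lam) (p : ℝ) (hp1 : m2 ≤ p) (hp2 : p ≤ m1)
    (heq : esym n 2 lam * p = 1) (h3 : esym n 3 lam ≥ -A)
    (h11 : lam ⟨0, by omega⟩ ≥ 6 * ((n : ℝ) - 2) * A / (n : ℝ))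
    (h11' : lam ⟨0, by omega⟩ ^ ((3 : ℝ) / 2) ≥
      6 * ((n : ℝ) - 2) * Real.sqrt (2 * A / ((n : ℝ) * ((n : ℝ) - 1) * m1)))
    (hc1 : esym n 2 lam +
        ((n : ℝ) - 1) * ((n : ℝ) - 2) / 2 *
          Real.sqrt (2 * A / ((n : ℝ) * ((n : ℝ) - 1) * esym n 1 lam * m1)) ^ 2 ≥
      5 / 6 * (esym n 1 lam - lam ⟨0, by omega⟩) * lam ⟨0, by omega⟩)
    (hc2 : ∀ j : Fin n, j ≠ ⟨0, by omega⟩ →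
      |lam j| ≤ ((n : ℝ) - 1) ^ 2 *
          Real.sqrt (2 * A / ((n : ℝ) * ((n : ℝ) - 1) * esym n 1 lam * m1)) +
        7 * ((n : ℝ) - 1) * esym n 2 lam / (5 * lam ⟨0, by omega⟩)) :
    esym n 2 lam ≥ 5 / 7 * (esym n 1 lam - lam ⟨0, by omega⟩) * lam ⟨0, by omega⟩ ∧
      ∀ j : Fin n, j ≠ ⟨0, by omega⟩ →
        |lam j| ≤ ((n : ℝ) - 1) ^ 2 *
            Real.sqrt (2 * A / ((n : ℝ) * ((n : ℝ) - 1) * lam ⟨0, by omega⟩ * m1)) +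
          7 * ((n : ℝ) - 1) / (5 * lam ⟨0, by omega⟩ * m2) := by
  have hn3 : (3 : ℝ) ≤ (n : ℝ) := by exact_mod_cast hn
  have hnpos : (0 : ℝ) < n := by linarith only [hn3]
  have hm1 : 0 < m1 := lt_of_lt_of_le hm2 hm
  obtain ⟨hσ1pos, hσ2pos⟩ := hG
  set L : ℝ := lam ⟨0, by omega⟩ with hLdef
  set σ1 : ℝ := esym n 1 lam with hσ1def
  set σ2 : ℝ := esym n 2 lam with hσ2def
  have hσ1sum : σ1 = ∑ i, lam i := by
    rw [hσ1def, esym, aux_sum_pc_one]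
  have hsq : σ1 ^ 2 = ∑ i, lam i ^ 2 + 2 * σ2 := by
    rw [hσ1sum, hσ2def, esym]; exact aux_sq_sum _ _
  have hLmax : ∀ i : Fin n, lam i ≤ L := by
    intro i
    exact hord (Fin.le_def.mpr (Nat.zero_le _))
  have hLsq : L ^ 2 ≤ ∑ i, lam i ^ 2 :=
    Finset.single_le_sum (f := fun i => lam i ^ 2)
      (fun i _ => sq_nonneg (lam i)) (Finset.mem_univ (⟨0, by omega⟩ : Fin n))
  clear_value σ2
  clear_value σ1
  clear_value L
  have hLpos : 0 < L := by
    by_contra h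
    push_neg at h
    have hs : σ1 ≤ 0 := by
      rw [hσ1sum]
      exact Finset.sum_nonpos fun i _ => le_trans (hLmax i) h
    linarith only [hs, hσ1pos]
  have hσ1L : L ≤ σ1 := by
    nlinarith only [hsq, hLsq, hσ2pos, hσ1pos, hLpos, sq_nonneg (σ1 - L), sq_nonneg (σ1 + L)]
  have hppos : 0 < p := lt_of_lt_of_le hm2 hp1
  have hσ2m2 : σ2 * m2 ≤ 1 := by
    nlinarith only [heq, hσ2pos, hp1]
  have hσ2m1 : 1 ≤ σ2 * m1 := by
    nlinarith only [heq, hσ2pos, hp2]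
  have hn1pos : (0 : ℝ) < (n : ℝ) - 1 := by linarith only [hn3]
  have hden1 : 0 < (n : ℝ) * ((n : ℝ) - 1) * σ1 * m1 :=
    mul_pos (mul_pos (mul_pos hnpos hn1pos) hσ1pos) hm1
  have hDnn : 0 ≤ 2 * A / ((n : ℝ) * ((n : ℝ) - 1) * σ1 * m1) :=
    div_nonneg (by linarith only [hA]) hden1.le
  have hsqrt_sq : Real.sqrt (2 * A / ((n : ℝ) * ((n : ℝ) - 1) * σ1 * m1)) ^ 2
      = 2 * A / ((n : ℝ) * ((n : ℝ) - 1) * σ1 * m1) := Real.sq_sqrt hDnn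
  have hE : ((n : ℝ) - 1) * ((n : ℝ) - 2) / 2 *
      (2 * A / ((n : ℝ) * ((n : ℝ) - 1) * σ1 * m1))
      = ((n : ℝ) - 2) * A / ((n : ℝ) * σ1 * m1) := by
    field_simp
  have h6A : 6 * ((n : ℝ) - 2) * A ≤ (n : ℝ) * L := by
    rw [ge_iff_le, div_le_iff₀ hnpos] at h11
    linarith only [h11]
  have hnσ1m1 : (0 : ℝ) < (n : ℝ) * σ1 * m1 := mul_pos (mul_pos hnpos hσ1pos) hm1
  have hEle : ((n : ℝ) - 2) * A / ((n : ℝ) * σ1 * m1) ≤ σ2 / 6 := by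
    rw [div_le_div_iff₀ hnσ1m1 (by norm_num)]
    have h1 : (n : ℝ) * L ≤ (n : ℝ) * σ1 := by
      nlinarith only [hnpos, hσ1L]
    have h2 : (n : ℝ) * σ1 * 1 ≤ (n : ℝ) * σ1 * (σ2 * m1) :=
      mul_le_mul_of_nonneg_left hσ2m1 (mul_pos hnpos hσ1pos).le
    nlinarith only [h1, h2, h6A]
  have part1 : σ2 ≥ 5 / 7 * (σ1 - L) * L := by
    have hc1' : σ2 + ((n : ℝ) - 2) * A / ((n : ℝ) * σ1 * m1) ≥ 5 / 6 * (σ1 - L) * L := by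
      calc σ2 + ((n : ℝ) - 2) * A / ((n : ℝ) * σ1 * m1)
          = σ2 + ((n : ℝ) - 1) * ((n : ℝ) - 2) / 2 *
            Real.sqrt (2 * A / ((n : ℝ) * ((n : ℝ) - 1) * σ1 * m1)) ^ 2 := by
            rw [hsqrt_sq, hE]
        _ ≥ 5 / 6 * (σ1 - L) * L := hc1
    linarith only [hc1', hEle]
  refine ⟨part1, ?_⟩
  intro j hj
  have hc2j := hc2 j hj
  have hden2 : 0 < (n : ℝ) * ((n : ℝ) - 1) * L * m1 :=
    mul_pos (mul_pos (mul_pos hnpos hn1pos) hLpos) hm1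
  have hsqrtle : Real.sqrt (2 * A / ((n : ℝ) * ((n : ℝ) - 1) * σ1 * m1))
      ≤ Real.sqrt (2 * A / ((n : ℝ) * ((n : ℝ) - 1) * L * m1)) := by
    apply Real.sqrt_le_sqrt
    apply div_le_div_of_nonneg_left (by linarith only [hA]) hden2
    nlinarith only [mul_pos (mul_pos hnpos hn1pos) hm1, hσ1L]
  have hterm1 : ((n : ℝ) - 1) ^ 2 * Real.sqrt (2 * A / ((n : ℝ) * ((n : ℝ) - 1) * σ1 * m1))
      ≤ ((n : ℝ) - 1) ^ 2 * Real.sqrt (2 * A / ((n : ℝ) * ((n : ℝ) - 1) * L * m1)) :=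
    mul_le_mul_of_nonneg_left hsqrtle (sq_nonneg _)
  have hterm2 : 7 * ((n : ℝ) - 1) * σ2 / (5 * L)
      ≤ 7 * ((n : ℝ) - 1) / (5 * L * m2) := by
    have h5L : (0 : ℝ) < 5 * L := by linarith only [hLpos]
    rw [div_le_div_iff₀ h5L (mul_pos h5L hm2)]
    nlinarith only [mul_nonneg (mul_nonneg hn1pos.le hLpos.le)
      (by linarith only [hσ2m2] : (0:ℝ) ≤ 1 - σ2 * m2)]
  linarith only [hc2j, hterm1, hterm2]
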